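/- Let G = ([n], E) and H = ([n], F) be directed graphs with graphical matrix spaces S_G, S_H ≤ M(n, F). If there exists an invertible matrix T ∈ GL(n, F) with T S_G Tᵗ ≤ S_H, then G is isomorphic to a subgraph of H; i.e., there is a permutation σ of [n] such that (i,j) ∈ E implies (σ(i), σ(j)) ∈ F. -/

import Mathlib

/-
The `(σ i, σ j)` entry of `T E_{i,j} Tᵗ` is `T_{σ i, i} T_{σ j, j}`, and a nonzero term of the
Leibniz expansion of `det T` gives a permutation `σ` making all `T_{σ i, i}` nonzero. So if
`(σ i, σ j)` were not in `E'`, the entry would have to vanish, although it is a product of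
two nonzero scalars.
-/

open Matrix

/-- The graphical matrix space of a directed graph with arc set `E ⊆ [n] × [n]`. -/
def graphSpace (F : Type*) [Field F] {n : ℕ} (E : Finset (Fin n × Fin n)) :
    Submodule F (Matrix (Fin n) (Fin n) F) :=
  Submodule.span F ((fun e => Matrix.single e.1 e.2 (1 : F)) '' (E : Set (Fin n × Fin n)))

namespace Matrix

theorem mul_single_mul_apply {l m n o α : Type*} [Fintype m] [Fintype n] [DecidableEq m]
    [DecidableEq n] [Semiring α] (A : Matrix l m α) (i : m) (j : n) (c : α) (B : Matrix n o α)
    (a : l) (b : o) : (A * single i j c * B) a b = A a i * c * B j b := by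
  simp [mul_apply, single_apply, ite_and]

theorem exists_perm_forall_ne_zero_of_det_ne_zero {n R : Type*} [Fintype n] [DecidableEq n]
    [CommRing R] {A : Matrix n n R} (hA : A.det ≠ 0) :
    ∃ σ : Equiv.Perm n, ∀ i, A (σ i) i ≠ 0 := by
  obtain ⟨σ, -, hσ⟩ := Finset.exists_ne_zero_of_sum_ne_zero (det_apply A ▸ hA)
  refine ⟨σ, fun i hi => hσ ?_⟩
  rw [Finset.prod_eq_zero (f := fun k => A (σ k) k) (Finset.mem_univ i) hi, smul_zero]

end Matrix

section graphSpace

variable {F : Type*} [Field F] {n : ℕ} {E : Finset (Fin n × Fin n)}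

theorem single_mem_graphSpace {i j : Fin n} (hij : (i, j) ∈ E) :
    single i j (1 : F) ∈ graphSpace F E :=
  Submodule.subset_span ⟨(i, j), hij, rfl⟩

theorem apply_eq_zero_of_mem_graphSpace {B : Matrix (Fin n) (Fin n) F} (hB : B ∈ graphSpace F E)
    {a b : Fin n} (hab : (a, b) ∉ E) : B a b = 0 := by
  have hle : graphSpace F E ≤ LinearMap.ker (entryLinearMap F F a b) := by
    rw [graphSpace, Submodule.span_le]
    rintro _ ⟨⟨i, j⟩, hij, rfl⟩
    simp only [SetLike.mem_coe, LinearMap.mem_ker, entryLinearMap_apply, single_apply]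
    exact if_neg fun ⟨hia, hjb⟩ => hab (hia ▸ hjb ▸ hij)
  exact hle hB

end graphSpace

/-- If `T S_G Tᵗ ≤ S_H` for some invertible `T`, then `G` is isomorphic to a subgraph
of `H`: some permutation `σ` of `[n]` maps every arc of `G` to an arc of `H`. -/
theorem stmt_15 (F : Type*) [Field F] (n : ℕ)
    (E E' : Finset (Fin n × Fin n)) (T : Matrix (Fin n) (Fin n) F)
    (hT : IsUnit T)
    (hcong : ∀ B ∈ graphSpace F E, T * B * Tᵀ ∈ graphSpace F E') :
    ∃ σ : Equiv.Perm (Fin n), ∀ i j : Fin n, (i, j) ∈ E → (σ i, σ j) ∈ E' := by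
  obtain ⟨σ, hσ⟩ :=
    exists_perm_forall_ne_zero_of_det_ne_zero ((isUnit_iff_isUnit_det T).mp hT).ne_zero
  refine ⟨σ, fun i j hij => ?_⟩
  by_contra hnot
  have hzero := apply_eq_zero_of_mem_graphSpace (hcong _ (single_mem_graphSpace hij)) hnot
  rw [mul_single_mul_apply, transpose_apply, mul_one] at hzero
  exact mul_ne_zero (hσ i) (hσ j) hzero
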